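/- For all processes p₁, p₂, p₃ of the recursion-free calculus CLL: (1) p_i ⊑_RS p₁ ∨ p₂ for i = 1, 2; (2) if p₁ ⊑_RS p₃ and p₂ ⊑_RS p₃ then p₁ ∨ p₂ ⊑_RS p₃; (3) p₁ ∧ p₂ ⊑_RS p_i for i = 1, 2; (4) if p₁ ⊑_RS p₂ and p₁ ⊑_RS p₃ then p₁ ⊑_RS p₂ ∧ p₃. -/

import Mathlib

open Classical

/-- Visible actions plus the invisible action τ. -/
inductive ActT (Act : Type) : Type where
  | act : Act → ActT Act
  | tau : ActT Act

/-- Processes of the recursion-free calculus CLL. -/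
inductive Proc (Act : Type) : Type where
  | nil  : Proc Act                                -- 0
  | bot  : Proc Act                                -- ⊥
  | pre  : ActT Act → Proc Act → Proc Act          -- α.t
  | ec   : Proc Act → Proc Act → Proc Act          -- t □ t
  | conj : Proc Act → Proc Act → Proc Act          -- t ∧ t
  | disj : Proc Act → Proc Act → Proc Act          -- t ∨ t
  | par  : Set Act → Proc Act → Proc Act → Proc Act -- t ∥_A t

namespace Proc

variable {Act : Type}

/-- Whether a process has a τ-transition (structural stratification used for
the negative premises of the SOS rules). -/
def hasTau : Proc Act → Prop
  | nil => False
  | bot => False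
  | pre a _ => a = ActT.tau
  | ec t₁ t₂ => hasTau t₁ ∨ hasTau t₂
  | conj t₁ t₂ => hasTau t₁ ∨ hasTau t₂
  | disj _ _ => True
  | par _ t₁ t₂ => hasTau t₁ ∨ hasTau t₂

/-- The transition relation, given by the SOS rules of CLL_R. -/
inductive Trans : Proc Act → ActT Act → Proc Act → Prop where
  | pre : Trans (pre α t) α t
  | ecL : Trans t₁ (ActT.act a) t₁' → ¬ hasTau t₂ →
      Trans (ec t₁ t₂) (ActT.act a) t₁'
  | ecR : ¬ hasTau t₁ → Trans t₂ (ActT.act a) t₂' →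
      Trans (ec t₁ t₂) (ActT.act a) t₂'
  | ecTauL : Trans t₁ ActT.tau t₁' → Trans (ec t₁ t₂) ActT.tau (ec t₁' t₂)
  | ecTauR : Trans t₂ ActT.tau t₂' → Trans (ec t₁ t₂) ActT.tau (ec t₁ t₂')
  | conjAct : Trans t₁ (ActT.act a) t₁' → Trans t₂ (ActT.act a) t₂' →
      Trans (conj t₁ t₂) (ActT.act a) (conj t₁' t₂')
  | conjTauL : Trans t₁ ActT.tau t₁' → Trans (conj t₁ t₂) ActT.tau (conj t₁' t₂)
  | conjTauR : Trans t₂ ActT.tau t₂' → Trans (conj t₁ t₂) ActT.tau (conj t₁ t₂')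
  | disjL : Trans (disj t₁ t₂) ActT.tau t₁
  | disjR : Trans (disj t₁ t₂) ActT.tau t₂
  | parTauL : Trans t₁ ActT.tau t₁' → Trans (par A t₁ t₂) ActT.tau (par A t₁' t₂)
  | parTauR : Trans t₂ ActT.tau t₂' → Trans (par A t₁ t₂) ActT.tau (par A t₁ t₂')
  | parL : a ∉ A → Trans t₁ (ActT.act a) t₁' → ¬ hasTau t₂ →
      Trans (par A t₁ t₂) (ActT.act a) (par A t₁' t₂)
  | parR : a ∉ A → ¬ hasTau t₁ → Trans t₂ (ActT.act a) t₂' →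
      Trans (par A t₁ t₂) (ActT.act a) (par A t₁ t₂')
  | parSync : a ∈ A → Trans t₁ (ActT.act a) t₁' → Trans t₂ (ActT.act a) t₂' →
      Trans (par A t₁ t₂) (ActT.act a) (par A t₁' t₂')

/-- The ready set I(p). -/
def ready (p : Proc Act) : Set (ActT Act) := {α | ∃ q, Trans p α q}

/-- p is stable if it has no τ-transition. -/
def Stable (p : Proc Act) : Prop := ∀ q, ¬ Trans p ActT.tau q

/-- The inconsistency predicate F, as the least predicate closed under the
predicative rules of CLL_R. -/
inductive Fp : Proc Act → Prop where
  | bot : Fp bot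
  | pre : Fp t → Fp (pre α t)
  | disj : Fp t₁ → Fp t₂ → Fp (disj t₁ t₂)
  | ecL : Fp t₁ → Fp (ec t₁ t₂)
  | ecR : Fp t₂ → Fp (ec t₁ t₂)
  | parL : Fp t₁ → Fp (par A t₁ t₂)
  | parR : Fp t₂ → Fp (par A t₁ t₂)
  | conjL : Fp t₁ → Fp (conj t₁ t₂)
  | conjR : Fp t₂ → Fp (conj t₁ t₂)
  | conjReady : Stable (conj t₁ t₂) → ready t₁ ≠ ready t₂ → Fp (conj t₁ t₂)
  | conjSucc : Trans (conj t₁ t₂) α s → (∀ y, Trans (conj t₁ t₂) α y → Fp y) →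
      Fp (conj t₁ t₂)
  | conjStable :
      (∀ y, Relation.ReflTransGen (fun x z => Trans x ActT.tau z) (conj t₁ t₂) y →
        Stable y → Fp y) →
      Fp (conj t₁ t₂)

/-- One τ-step with both endpoints consistent. -/
def tauStepF (p q : Proc Act) : Prop := Trans p ActT.tau q ∧ ¬ Fp p ∧ ¬ Fp q

/-- p ⇒_F| q : a sequence of τ-transitions from p to q, all states outside F,
with q stable. -/
def epsF (p q : Proc Act) : Prop :=
  Relation.ReflTransGen tauStepF p q ∧ ¬ Fp p ∧ ¬ Fp q ∧ Stable q

/-- p =a⇒_F| q. -/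
def wkF (a : Act) (p q : Proc Act) : Prop :=
  ∃ r s, Relation.ReflTransGen tauStepF p r ∧ ¬ Fp p ∧ ¬ Fp r ∧
    Trans r (ActT.act a) s ∧ ¬ Fp s ∧
    Relation.ReflTransGen tauStepF s q ∧ ¬ Fp q ∧ Stable q

/-- R is a stable ready simulation. -/
def StableRS (R : Proc Act → Proc Act → Prop) : Prop :=
  ∀ p q, R p q →
    Stable p ∧ Stable q ∧
    (¬ Fp p → ¬ Fp q) ∧
    (∀ a p', wkF a p p' → ∃ q', wkF a q q' ∧ R p' q') ∧
    (¬ Fp p → ready p = ready q)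

/-- p ⊏̃_RS q. -/
def rsLT (p q : Proc Act) : Prop := ∃ R, StableRS R ∧ R p q

/-- p ⊑_RS q. -/
def rsLE (p q : Proc Act) : Prop :=
  ∀ p', epsF p p' → ∃ q', epsF q q' ∧ rsLT p' q'

/-- p =_RS q. -/
def rsEq (p q : Proc Act) : Prop := rsLE p q ∧ rsLE q p

/-- Basic process terms T(Σ_B): no ⊥ and no ∧. -/
inductive Basic : Proc Act → Prop where
  | nil : Basic nil
  | pre : Basic t → Basic (pre α t)
  | disj : Basic t₁ → Basic t₂ → Basic (disj t₁ t₂)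
  | ec : Basic t₁ → Basic t₂ → Basic (ec t₁ t₂)
  | par : Basic t₁ → Basic t₂ → Basic (par A t₁ t₂)

/-- General external choice □ over a finite sequence (left-nested). -/
def ecList : List (Proc Act) → Proc Act
  | [] => nil
  | t :: ts => ts.foldl ec t

/-- General disjunction ⋁ over a nonempty finite sequence (left-nested). -/
def djList : List (Proc Act) → Proc Act
  | [] => bot
  | t :: ts => ts.foldl disj t

/-- □_{i<n} a_i.t_i for a sequence of prefixed terms. -/
def ecPre (l : List (Act × Proc Act)) : Proc Act :=
  ecList (l.map fun x => pre (ActT.act x.1) x.2)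

/-- The expansion term E = ((□Ω₁) □ (□Ω₂)) □ (□Ω₃). -/
noncomputable def expTerm (A : Set Act) (l₁ l₂ : List (Act × Proc Act)) : Proc Act :=
  ec (ec
      (ecList ((l₁.filter fun x => decide (x.1 ∉ A)).map
        fun x => pre (ActT.act x.1) (par A x.2 (ecPre l₂))))
      (ecList ((l₂.filter fun x => decide (x.1 ∉ A)).map
        fun x => pre (ActT.act x.1) (par A (ecPre l₁) x.2))))
    (ecList (l₁.flatMap fun x =>
      (l₂.filter fun y => decide (y.1 = x.1 ∧ x.1 ∈ A)).map
        fun y => pre (ActT.act x.1) (par A x.2 y.2)))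

/-- Normal forms NF_B. -/
inductive NFB : Proc Act → Prop where
  | mk (ls : List (List (Act × Proc Act))) (hne : ls ≠ [])
      (hnodup : ∀ l ∈ ls, (l.map Prod.fst).Nodup)
      (hsub : ∀ l ∈ ls, ∀ x ∈ l, NFB x.2) :
      NFB (djList (ls.map ecPre))

/-- NF = NF_B ∪ {⊥}. -/
def NF (p : Proc Act) : Prop := NFB p ∨ p = bot

/-- Derivability ⊢ t ≤ t' in the proof system AX_CLL. -/
inductive Deriv : Proc Act → Proc Act → Prop where
  | refl (t) : Deriv t t
  | trans : Deriv t t' → Deriv t' t'' → Deriv t t''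
  | mono_pre : Deriv t t' → Deriv (pre α t) (pre α t')
  | mono_ec : Deriv s s' → Deriv t t' → Deriv (ec s t) (ec s' t')
  | mono_conj : Deriv s s' → Deriv t t' → Deriv (conj s t) (conj s' t')
  | mono_disj : Deriv s s' → Deriv t t' → Deriv (disj s t) (disj s' t')
  | mono_par : Deriv s s' → Deriv t t' → Deriv (par A s t) (par A s' t')
  -- external choice
  | ec_comm : Deriv (ec x y) (ec y x)
  | ec_assoc₁ : Deriv (ec (ec x y) z) (ec x (ec y z))
  | ec_assoc₂ : Deriv (ec x (ec y z)) (ec (ec x y) z)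
  | ec_idem₁ : Deriv (ec x x) x
  | ec_idem₂ : Deriv x (ec x x)
  | ec_nil₁ : Deriv (ec x nil) x
  | ec_nil₂ : Deriv x (ec x nil)
  | ec_bot₁ : Deriv (ec x bot) bot
  | ec_bot₂ : Deriv bot (ec x bot)
  -- disjunction
  | disj_comm : Deriv (disj x y) (disj y x)
  | disj_assoc₁ : Deriv (disj x (disj y z)) (disj (disj x y) z)
  | disj_assoc₂ : Deriv (disj (disj x y) z) (disj x (disj y z))
  | disj_idem₁ : Deriv (disj x x) x
  | disj_idem₂ : Deriv x (disj x x)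
  | disj_bot₁ : Deriv (disj x bot) x
  | disj_bot₂ : Deriv x (disj x bot)
  | disj_le : Deriv x (disj x y)
  -- conjunction
  | conj_comm : Deriv (conj x y) (conj y x)
  | conj_idem₁ : Deriv (conj x x) x
  | conj_idem₂ : Deriv x (conj x x)
  | conj_bot₁ : Deriv (conj x bot) bot
  | conj_bot₂ : Deriv bot (conj x bot)
  -- prefixing
  | pre_bot₁ : Deriv (pre (ActT.act a) bot) bot
  | pre_bot₂ : Deriv bot (pre (ActT.act a) bot)
  | tau_pre₁ : Deriv (pre ActT.tau x) x
  | tau_pre₂ : Deriv x (pre ActT.tau x)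
  -- parallel
  | par_comm : Deriv (par A x y) (par A y x)
  | par_bot₁ : Deriv (par A x bot) bot
  | par_bot₂ : Deriv bot (par A x bot)
  -- distribution over disjunction
  | ds_ec : Deriv (ec x (disj y z)) (disj (ec x y) (ec x z))
  | ds_conj : Deriv (conj x (disj y z)) (disj (conj x y) (conj x z))
  | ds_par : Deriv (par A x (disj y z)) (disj (par A x y) (par A x z))
  | ds_pre : Basic x → Basic y →
      Deriv (pre (ActT.act a) (disj x y)) (ec (pre (ActT.act a) x) (pre (ActT.act a) y))
  -- external choice and conjunction
  | ecc1₁ (l₁ l₂ : List (Act × Proc Act)) :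
      {a | a ∈ l₁.map Prod.fst} ≠ {a | a ∈ l₂.map Prod.fst} →
      Deriv (conj (ecPre l₁) (ecPre l₂)) bot
  | ecc1₂ (l₁ l₂ : List (Act × Proc Act)) :
      {a | a ∈ l₁.map Prod.fst} ≠ {a | a ∈ l₂.map Prod.fst} →
      Deriv bot (conj (ecPre l₁) (ecPre l₂))
  | ecc2 (l : List (Act × Proc Act × Proc Act)) :
      Deriv (ecPre (l.map fun x => (x.1, conj x.2.1 x.2.2)))
            (conj (ecPre (l.map fun x => (x.1, x.2.1)))
                  (ecPre (l.map fun x => (x.1, x.2.2))))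
  | ecc3 (l : List (Act × Proc Act × Proc Act)) :
      (l.map Prod.fst).Nodup →
      Deriv (conj (ecPre (l.map fun x => (x.1, x.2.1)))
                  (ecPre (l.map fun x => (x.1, x.2.2))))
            (ecPre (l.map fun x => (x.1, conj x.2.1 x.2.2)))
  -- expansion
  | exp1 (A : Set Act) (l₁ l₂ : List (Act × Proc Act)) :
      Deriv (par A (ecPre l₁) (ecPre l₂)) (expTerm A l₁ l₂)
  | exp2 (A : Set Act) (l₁ l₂ : List (Act × Proc Act)) :
      (∀ x ∈ l₁, Basic x.2) → (∀ x ∈ l₂, Basic x.2) →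
      Deriv (expTerm A l₁ l₂) (par A (ecPre l₁) (ecPre l₂))

end Proc

/-!
The inconsistency predicate `F` is closed under τ-steps, so a τ-chain ending in a consistent
process never passes through `F`. Disjunction makes exactly one τ-step, to either disjunct,
which gives (1) and (2). A stable consistent conjunction has components with equal ready sets
and moves only by synchronised visible steps, so projecting it onto either component is a
stable ready simulation; this gives (3).

For (4) the heart is: if a consistent process `p` is ready-simulated by both `y` and `z`, then
`y ∧ z` is consistent. This goes by induction on a derivation of `F (y ∧ z)`. The rules
`conjL`, `conjR` and `conjReady` are excluded by the simulation clauses. For `conjSucc`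
along `a`, `p` has a weak `a`-move matched by `y` and `z`, so some `a`-successor of `y ∧ z`
τ-reaches a conjunction `y' ∧ z'` of simulators of `p'`; as `F` is closed under τ,
`y' ∧ z'` would be inconsistent, and this is ruled out by an outer induction on the size
of the conjunction. With this, pairing `p` with `y ∧ z` is a stable ready simulation.
-/

namespace Proc

variable {Act : Type}

open Relation

abbrev tauStep (p q : Proc Act) : Prop := Trans p ActT.tau q

lemma hasTau_of_trans_tau {p q : Proc Act} (h : Trans p ActT.tau q) : hasTau p := by
  generalize hα : ActT.tau = α at h
  induction h <;> simp_all [hasTau]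

lemma stable_of_trans_act {p q : Proc Act} {a : Act} (h : Trans p (ActT.act a) q) :
    Stable p := by
  generalize hα : ActT.act a = α at h
  induction h with
  | pre => intro r hr; cases hr; cases hα
  | ecL _ h₂ ih => intro r hr; cases hr with
    | ecTauL h => exact ih hα _ h
    | ecTauR h => exact h₂ (hasTau_of_trans_tau h)
  | ecR h₁ _ ih => intro r hr; cases hr with
    | ecTauL h => exact h₁ (hasTau_of_trans_tau h)
    | ecTauR h => exact ih hα _ h
  | conjAct _ _ ih₁ ih₂ => intro r hr; cases hr with
    | conjTauL h => exact ih₁ hα _ h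
    | conjTauR h => exact ih₂ hα _ h
  | parL _ _ h₂ ih => intro r hr; cases hr with
    | parTauL h => exact ih hα _ h
    | parTauR h => exact h₂ (hasTau_of_trans_tau h)
  | parR _ h₁ _ ih => intro r hr; cases hr with
    | parTauL h => exact h₁ (hasTau_of_trans_tau h)
    | parTauR h => exact ih hα _ h
  | parSync _ _ _ ih₁ ih₂ => intro r hr; cases hr with
    | parTauL h => exact ih₁ hα _ h
    | parTauR h => exact ih₂ hα _ h
  | _ => cases hα

lemma stable_conj_iff {x y : Proc Act} : Stable (conj x y) ↔ Stable x ∧ Stable y := by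
  refine ⟨fun h => ⟨fun r hr => h _ hr.conjTauL, fun r hr => h _ hr.conjTauR⟩, ?_⟩
  rintro ⟨hx, hy⟩ r (hr | hr)
  · exact hx _ ‹_›
  · exact hy _ ‹_›

lemma sizeOf_lt_of_trans {p q : Proc Act} {α : ActT Act} (h : Trans p α q) :
    sizeOf q < sizeOf p := by
  induction h <;> simp <;> omega

lemma sizeOf_le_of_tauChain {p q : Proc Act} (h : ReflTransGen tauStep p q) :
    sizeOf q ≤ sizeOf p := by
  induction h with
  | refl => rfl
  | tail _ h ih => exact (sizeOf_lt_of_trans h).le.trans ih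

@[simp] lemma fp_pre_iff {α : ActT Act} {t : Proc Act} : Fp (pre α t) ↔ Fp t :=
  ⟨fun h => by cases h; assumption, Fp.pre⟩

@[simp] lemma fp_disj_iff {x y : Proc Act} : Fp (disj x y) ↔ Fp x ∧ Fp y :=
  ⟨fun h => by cases h; constructor <;> assumption, fun h => Fp.disj h.1 h.2⟩

@[simp] lemma fp_ec_iff {x y : Proc Act} : Fp (ec x y) ↔ Fp x ∨ Fp y :=
  ⟨fun h => by cases h <;> simp_all, fun h => h.elim Fp.ecL Fp.ecR⟩

@[simp] lemma fp_par_iff {A : Set Act} {x y : Proc Act} : Fp (par A x y) ↔ Fp x ∨ Fp y :=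
  ⟨fun h => by cases h <;> simp_all, fun h => h.elim Fp.parL Fp.parR⟩

lemma Fp.of_tauStep {p q : Proc Act} (hp : Fp p) (h : tauStep p q) : Fp q := by
  induction hp generalizing q with
  | bot => cases h
  | pre _ => cases h; assumption
  | disj h₁ h₂ => cases h <;> assumption
  | ecL _ ih => cases h with
    | ecTauL h => exact (ih h).ecL
    | ecTauR h => exact Fp.ecL ‹_›
  | ecR _ ih => cases h with
    | ecTauL h => exact Fp.ecR ‹_›
    | ecTauR h => exact (ih h).ecR
  | parL _ ih => cases h with
    | parTauL h => exact (ih h).parL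
    | parTauR h => exact Fp.parL ‹_›
  | parR _ ih => cases h with
    | parTauL h => exact Fp.parR ‹_›
    | parTauR h => exact (ih h).parR
  | conjL _ ih => cases h with
    | conjTauL h => exact (ih h).conjL
    | conjTauR h => exact Fp.conjL ‹_›
  | conjR _ ih => cases h with
    | conjTauL h => exact Fp.conjR ‹_›
    | conjTauR h => exact (ih h).conjR
  | conjReady hs _ => exact absurd h (hs q)
  | @conjSucc t₁ t₂ α s hα hall =>
    cases α with
    | tau => exact hall q h
    | act a => exact absurd h (stable_of_trans_act hα q)
  | conjStable hall =>
    cases h with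
    | conjTauL h => exact Fp.conjStable fun w hw => hall w (.head h.conjTauL hw)
    | conjTauR h => exact Fp.conjStable fun w hw => hall w (.head h.conjTauR hw)

lemma Fp.of_tauChain {p q : Proc Act} (hp : Fp p) (h : ReflTransGen tauStep p q) : Fp q := by
  induction h with
  | refl => exact hp
  | tail _ h ih => exact ih.of_tauStep h

lemma reflTransGen_tauStepF_of_not_fp {p q : Proc Act} (h : ReflTransGen tauStep p q)
    (hq : ¬ Fp q) : ReflTransGen tauStepF p q := by
  induction h using ReflTransGen.head_induction_on with
  | refl => exact .refl
  | head hstep hrest ih =>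
    exact .head ⟨hstep, fun hF => hq (hF.of_tauChain (.head hstep hrest)),
      fun hF => hq (hF.of_tauChain hrest)⟩ ih

lemma tauChain_of_epsF {p q : Proc Act} (h : epsF p q) : ReflTransGen tauStep p q :=
  ReflTransGen.mono (fun _ _ h => h.1) _ _ h.1

lemma epsF_of_tauChain {p q : Proc Act} (h : ReflTransGen tauStep p q) (hq : ¬ Fp q)
    (hs : Stable q) : epsF p q :=
  ⟨reflTransGen_tauStepF_of_not_fp h hq, fun hp => hq (hp.of_tauChain h), hq, hs⟩

lemma exists_trans_not_fp {p q : Proc Act} {α : ActT Act} (hp : ¬ Fp p) (h : Trans p α q) :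
    ∃ q', Trans p α q' ∧ ¬ Fp q' := by
  induction h with
  | pre => exact ⟨_, .pre, by simpa using hp⟩
  | ecL _ h₂ ih =>
    obtain ⟨q', h, hq'⟩ := ih (by simp_all)
    exact ⟨q', .ecL h h₂, hq'⟩
  | ecR h₁ _ ih =>
    obtain ⟨q', h, hq'⟩ := ih (by simp_all)
    exact ⟨q', .ecR h₁ h, hq'⟩
  | ecTauL _ ih =>
    obtain ⟨q', h, hq'⟩ := ih (by simp_all)
    exact ⟨_, .ecTauL h, by simp_all⟩
  | ecTauR _ ih =>
    obtain ⟨q', h, hq'⟩ := ih (by simp_all)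
    exact ⟨_, .ecTauR h, by simp_all⟩
  | parTauL _ ih =>
    obtain ⟨q', h, hq'⟩ := ih (by simp_all)
    exact ⟨_, .parTauL h, by simp_all⟩
  | parTauR _ ih =>
    obtain ⟨q', h, hq'⟩ := ih (by simp_all)
    exact ⟨_, .parTauR h, by simp_all⟩
  | parL ha _ h₂ ih =>
    obtain ⟨q', h, hq'⟩ := ih (by simp_all)
    exact ⟨_, .parL ha h h₂, by simp_all⟩
  | parR ha h₁ _ ih =>
    obtain ⟨q', h, hq'⟩ := ih (by simp_all)
    exact ⟨_, .parR ha h₁ h, by simp_all⟩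
  | parSync ha _ _ ih₁ ih₂ =>
    obtain ⟨q₁, h₁, hq₁⟩ := ih₁ (by simp_all)
    obtain ⟨q₂, h₂, hq₂⟩ := ih₂ (by simp_all)
    exact ⟨_, .parSync ha h₁ h₂, by simp_all⟩
  | @disjL t₁ t₂ | @disjR t₁ t₂ =>
    by_cases h₁ : Fp t₁
    · exact ⟨t₂, .disjR, fun h₂ => hp (.disj h₁ h₂)⟩
    · exact ⟨t₁, .disjL, h₁⟩
  | conjAct h₁ h₂ => by_contra! hall; exact hp (.conjSucc (.conjAct h₁ h₂) hall)
  | conjTauL h => by_contra! hall; exact hp (.conjSucc h.conjTauL hall)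
  | conjTauR h => by_contra! hall; exact hp (.conjSucc h.conjTauR hall)

lemma exists_epsF {p : Proc Act} (hp : ¬ Fp p) : ∃ q, epsF p q := by
  induction hn : sizeOf p using Nat.strong_induction_on generalizing p with
  | _ n ih =>
    by_cases hs : Stable p
    · exact ⟨p, .refl, hp, hp, hs⟩
    · obtain ⟨r, hr⟩ : ∃ r, tauStep p r := by simpa [Stable] using hs
      obtain ⟨r', hr', hr'F⟩ := exists_trans_not_fp hp hr
      obtain ⟨q, hchain, -, hq⟩ := ih _ (hn ▸ sizeOf_lt_of_trans hr') hr'F rfl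
      exact ⟨q, .head ⟨hr', hp, hr'F⟩ hchain, hp, hq⟩

lemma wkF_iff_of_stable {p p' : Proc Act} {a : Act} (hp : Stable p) :
    wkF a p p' ↔ ¬ Fp p ∧ ∃ s, Trans p (ActT.act a) s ∧ epsF s p' := by
  constructor
  · rintro ⟨r, s, hpr, hpF, -, hrs, hsF, hsp', hp'F, hp'⟩
    obtain rfl | ⟨c, hc, -⟩ := hpr.cases_head
    · exact ⟨hpF, s, hrs, hsp', hsF, hp'F, hp'⟩
    · exact absurd hc.1 (hp c)
  · rintro ⟨hpF, s, hs, hsp', hsF, hp'F, hp'⟩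
    exact ⟨p, s, .refl, hpF, hpF, hs, hsF, hsp', hp'F, hp'⟩

lemma exists_wkF {p q : Proc Act} {a : Act} (hp : ¬ Fp p) (h : Trans p (ActT.act a) q) :
    ∃ p', wkF a p p' := by
  obtain ⟨s, hs, hsF⟩ := exists_trans_not_fp hp h
  obtain ⟨p', hsp'⟩ := exists_epsF hsF
  exact ⟨p', (wkF_iff_of_stable (stable_of_trans_act h)).2 ⟨hp, s, hs, hsp'⟩⟩

lemma epsF_disj_iff {p₁ p₂ q : Proc Act} : epsF (disj p₁ p₂) q ↔ epsF p₁ q ∨ epsF p₂ q := by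
  constructor
  · rintro ⟨hchain, -, hqF, hq⟩
    obtain rfl | ⟨c, ⟨hc, -, hcF⟩, hcq⟩ := hchain.cases_head
    · exact absurd .disjL (hq p₁)
    · cases hc
      · exact .inl ⟨hcq, hcF, hqF, hq⟩
      · exact .inr ⟨hcq, hcF, hqF, hq⟩
  · rintro (⟨hchain, hpF, hqF, hq⟩ | ⟨hchain, hpF, hqF, hq⟩)
    · exact ⟨.head ⟨.disjL, by simp_all, hpF⟩ hchain, by simp_all, hqF, hq⟩
    · exact ⟨.head ⟨.disjR, by simp_all, hpF⟩ hchain, by simp_all, hqF, hq⟩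

lemma tauStepF_chain_conj {p₁ p₂ q : Proc Act} (h : ReflTransGen tauStepF (conj p₁ p₂) q) :
    ∃ q₁ q₂, q = conj q₁ q₂ ∧ ReflTransGen tauStepF p₁ q₁ ∧ ReflTransGen tauStepF p₂ q₂ := by
  induction h with
  | refl => exact ⟨p₁, p₂, rfl, .refl, .refl⟩
  | tail _ hstep ih =>
    obtain ⟨q₁, q₂, rfl, h₁, h₂⟩ := ih
    obtain ⟨hstep, hF, hF'⟩ := hstep
    cases hstep with
    | conjTauL h => exact ⟨_, _, rfl, h₁.tail ⟨h, fun h => hF h.conjL, fun h => hF' h.conjL⟩, h₂⟩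
    | conjTauR h => exact ⟨_, _, rfl, h₁, h₂.tail ⟨h, fun h => hF h.conjR, fun h => hF' h.conjR⟩⟩

lemma epsF_conj {p₁ p₂ q : Proc Act} (h : epsF (conj p₁ p₂) q) :
    ∃ q₁ q₂, q = conj q₁ q₂ ∧ epsF p₁ q₁ ∧ epsF p₂ q₂ := by
  obtain ⟨hchain, hpF, hqF, hq⟩ := h
  obtain ⟨q₁, q₂, rfl, h₁, h₂⟩ := tauStepF_chain_conj hchain
  exact ⟨q₁, q₂, rfl, ⟨h₁, fun h => hpF h.conjL, fun h => hqF h.conjL, (stable_conj_iff.1 hq).1⟩,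
    ⟨h₂, fun h => hpF h.conjR, fun h => hqF h.conjR, (stable_conj_iff.1 hq).2⟩⟩

lemma tauChain_conj {p₁ p₂ q₁ q₂ : Proc Act} (h₁ : ReflTransGen tauStep p₁ q₁)
    (h₂ : ReflTransGen tauStep p₂ q₂) : ReflTransGen tauStep (conj p₁ p₂) (conj q₁ q₂) :=
  (h₁.lift (conj · p₂) fun _ _ h => h.conjTauL).trans (h₂.lift (conj q₁) fun _ _ h => h.conjTauR)

lemma ready_conj {x y : Proc Act} (hs : Stable (conj x y)) (hxy : ready x = ready y) :
    ready (conj x y) = ready x := by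
  ext (a | _)
  · constructor
    · rintro ⟨_, hq⟩
      cases hq with
      | conjAct h₁ _ => exact ⟨_, h₁⟩
    · rintro ⟨q₁, h₁⟩
      obtain ⟨q₂, h₂⟩ : ActT.act a ∈ ready y := hxy ▸ ⟨q₁, h₁⟩
      exact ⟨_, .conjAct h₁ h₂⟩
  · exact ⟨fun ⟨q, hq⟩ => (hs q hq).elim, fun ⟨q, hq⟩ => (stable_conj_iff.1 hs).1 q hq |>.elim⟩

lemma ready_eq_of_not_fp_conj {x y : Proc Act} (hs : Stable (conj x y)) (hF : ¬ Fp (conj x y)) :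
    ready x = ready y := by
  by_contra h
  exact hF (.conjReady hs h)

lemma wkF_conj {a b x' : Proc Act} {c : Act} (hs : Stable (conj a b)) (h : wkF c (conj a b) x') :
    ∃ a' b', x' = conj a' b' ∧ wkF c a a' ∧ wkF c b b' := by
  obtain ⟨ha, hb⟩ := stable_conj_iff.1 hs
  obtain ⟨hF, s, hs', hsx'⟩ := (wkF_iff_of_stable hs).1 h
  cases hs' with
  | conjAct h₁ h₂ =>
    obtain ⟨a', b', rfl, h₁', h₂'⟩ := epsF_conj hsx'
    exact ⟨a', b', rfl, (wkF_iff_of_stable ha).2 ⟨fun h => hF h.conjL, _, h₁, h₁'⟩,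
      (wkF_iff_of_stable hb).2 ⟨fun h => hF h.conjR, _, h₂, h₂'⟩⟩

lemma stableRS_rsLT : StableRS (rsLT (Act := Act)) := by
  rintro p q ⟨R, hR, hpq⟩
  obtain ⟨hp, hq, hF, hsim, hready⟩ := hR p q hpq
  exact ⟨hp, hq, hF, fun a p' hw => (hsim a p' hw).imp fun _ h => ⟨h.1, R, hR, h.2⟩, hready⟩

lemma rsLT_refl {p : Proc Act} (hp : Stable p) : rsLT p p := by
  refine ⟨fun p q => p = q ∧ Stable p, ?_, rfl, hp⟩
  rintro p _ ⟨rfl, hp⟩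
  refine ⟨hp, hp, id, fun a p' hw => ⟨p', hw, rfl, ?_⟩, fun _ => rfl⟩
  obtain ⟨-, -, -, -, -, -, -, -, -, hp'⟩ := hw
  exact hp'

lemma exists_conj_of_wkF {p p' y z : Proc Act} {a : Act} (hy : rsLT p y) (hz : rsLT p z)
    (hw : wkF a p p') : ∃ s y' z', Trans (conj y z) (ActT.act a) s ∧
      ReflTransGen tauStep s (conj y' z') ∧ rsLT p' y' ∧ rsLT p' z' := by
  obtain ⟨-, hys, -, hysim, -⟩ := stableRS_rsLT p y hy
  obtain ⟨-, hzs, -, hzsim, -⟩ := stableRS_rsLT p z hz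
  obtain ⟨y', hwy, hy'⟩ := hysim a p' hw
  obtain ⟨z', hwz, hz'⟩ := hzsim a p' hw
  obtain ⟨-, s₁, h₁, hs₁⟩ := (wkF_iff_of_stable hys).1 hwy
  obtain ⟨-, s₂, h₂, hs₂⟩ := (wkF_iff_of_stable hzs).1 hwz
  exact ⟨_, y', z', .conjAct h₁ h₂, tauChain_conj (tauChain_of_epsF hs₁) (tauChain_of_epsF hs₂),
    hy', hz'⟩

lemma not_fp_conj_of_rsLT {p y z : Proc Act} (hp : ¬ Fp p) (hy : rsLT p y) (hz : rsLT p z) :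
    ¬ Fp (conj y z) := by
  induction hn : sizeOf (conj y z) using Nat.strong_induction_on generalizing p y z with
  | _ n ih =>
  obtain ⟨-, hys, hyF, -, hyready⟩ := stableRS_rsLT p y hy
  obtain ⟨-, hzs, hzF, -, hzready⟩ := stableRS_rsLT p z hz
  have hs : Stable (conj y z) := stable_conj_iff.2 ⟨hys, hzs⟩
  intro hF
  generalize hx : conj y z = x at hF hs
  induction hF with
  | conjL h => cases hx; exact hyF hp h
  | conjR h => cases hx; exact hzF hp h
  | conjReady _ hne => cases hx; exact hne ((hyready hp).symm.trans (hzready hp))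
  | @conjSucc t₁ t₂ α s hα hall =>
    cases hx
    cases α with
    | tau => exact hs _ hα
    | act a =>
      obtain ⟨p₀, hp₀⟩ : ActT.act a ∈ ready p := by
        rw [hyready hp]
        cases hα with
        | conjAct h _ => exact ⟨_, h⟩
      obtain ⟨p', hw⟩ := exists_wkF hp hp₀
      obtain ⟨s, y', z', hs', hchain, hy', hz'⟩ := exists_conj_of_wkF hy hz hw
      have hsize : sizeOf (conj y' z') < n :=
        hn ▸ (sizeOf_le_of_tauChain hchain).trans_lt (sizeOf_lt_of_trans hs')
      obtain ⟨-, -, -, -, -, -, -, -, hp', -⟩ := hw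
      exact ih _ hsize hp' hy' hz' rfl ((hall s hs').of_tauChain hchain)
  -- `y ∧ z` is one of its own stable τ-descendants
  | conjStable _ ih' => exact ih' _ .refl hs hx hs
  | _ => cases hx

lemma stableRS_conj_proj :
    StableRS fun x y : Proc Act => ∃ a b, x = conj a b ∧ Stable x ∧ (y = a ∨ y = b) := by
  rintro _ y ⟨a, b, rfl, hs, hy⟩
  refine ⟨hs, ?_, fun hF h => ?_, fun c x' hw => ?_, fun hF => ?_⟩
  · rcases hy with rfl | rfl
    exacts [(stable_conj_iff.1 hs).1, (stable_conj_iff.1 hs).2]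
  · rcases hy with rfl | rfl
    exacts [hF h.conjL, hF h.conjR]
  · have hs' : Stable x' := by obtain ⟨-, -, -, -, -, -, -, -, -, hs'⟩ := hw; exact hs'
    obtain ⟨a', b', rfl, ha', hb'⟩ := wkF_conj hs hw
    rcases hy with rfl | rfl
    · exact ⟨a', ha', a', b', rfl, hs', .inl rfl⟩
    · exact ⟨b', hb', a', b', rfl, hs', .inr rfl⟩
  · have hab := ready_eq_of_not_fp_conj hs hF
    rcases hy with rfl | rfl
    exacts [ready_conj hs hab, (ready_conj hs hab).trans hab]

lemma stableRS_conj_of_rsLT :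
    StableRS fun p x : Proc Act => ∃ y z, x = conj y z ∧ rsLT p y ∧ rsLT p z := by
  rintro p _ ⟨y, z, rfl, hy, hz⟩
  obtain ⟨hp, hys, -, -, hyready⟩ := stableRS_rsLT p y hy
  obtain ⟨-, hzs, -, -, hzready⟩ := stableRS_rsLT p z hz
  have hs : Stable (conj y z) := stable_conj_iff.2 ⟨hys, hzs⟩
  refine ⟨hp, hs, fun hpF => not_fp_conj_of_rsLT hpF hy hz, fun a p' hw => ?_, fun hpF => ?_⟩
  · obtain ⟨hpF, -, -, ⟨-, -, hp'F, -⟩⟩ := (wkF_iff_of_stable hp).1 hw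
    obtain ⟨s, y', z', hs', hchain, hy', hz'⟩ := exists_conj_of_wkF hy hz hw
    have hF' := not_fp_conj_of_rsLT hp'F hy' hz'
    have hs'' : Stable (conj y' z') :=
      stable_conj_iff.2 ⟨(stableRS_rsLT _ _ hy').2.1, (stableRS_rsLT _ _ hz').2.1⟩
    exact ⟨conj y' z', (wkF_iff_of_stable hs).2 ⟨not_fp_conj_of_rsLT hpF hy hz, s, hs',
      epsF_of_tauChain hchain hF' hs''⟩, y', z', rfl, hy', hz'⟩
  · rw [ready_conj hs ((hyready hpF).symm.trans (hzready hpF)), hyready hpF]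

lemma rsLE_disj_left (p₁ p₂ : Proc Act) : rsLE p₁ (disj p₁ p₂) :=
  fun p' h => ⟨p', epsF_disj_iff.2 (.inl h), rsLT_refl h.2.2.2⟩

lemma rsLE_disj_right (p₁ p₂ : Proc Act) : rsLE p₂ (disj p₁ p₂) :=
  fun p' h => ⟨p', epsF_disj_iff.2 (.inr h), rsLT_refl h.2.2.2⟩

lemma disj_rsLE {p₁ p₂ p₃ : Proc Act} (h₁ : rsLE p₁ p₃) (h₂ : rsLE p₂ p₃) :
    rsLE (disj p₁ p₂) p₃ :=
  fun p' h => (epsF_disj_iff.1 h).elim (h₁ p') (h₂ p')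

lemma conj_rsLE_left (p₁ p₂ : Proc Act) : rsLE (conj p₁ p₂) p₁ := by
  intro p' h
  obtain ⟨q₁, q₂, rfl, h₁, -⟩ := epsF_conj h
  exact ⟨q₁, h₁, _, stableRS_conj_proj, q₁, q₂, rfl, h.2.2.2, .inl rfl⟩

lemma conj_rsLE_right (p₁ p₂ : Proc Act) : rsLE (conj p₁ p₂) p₂ := by
  intro p' h
  obtain ⟨q₁, q₂, rfl, -, h₂⟩ := epsF_conj h
  exact ⟨q₂, h₂, _, stableRS_conj_proj, q₁, q₂, rfl, h.2.2.2, .inr rfl⟩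

lemma rsLE_conj {p₁ p₂ p₃ : Proc Act} (h₂ : rsLE p₁ p₂) (h₃ : rsLE p₁ p₃) :
    rsLE p₁ (conj p₂ p₃) := by
  intro p' h
  obtain ⟨q₂, hq₂, hp'q₂⟩ := h₂ p' h
  obtain ⟨q₃, hq₃, hp'q₃⟩ := h₃ p' h
  have hchain := tauChain_conj (tauChain_of_epsF hq₂) (tauChain_of_epsF hq₃)
  have hF := not_fp_conj_of_rsLT h.2.2.1 hp'q₂ hp'q₃
  have hs := stable_conj_iff.2 ⟨hq₂.2.2.2, hq₃.2.2.2⟩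
  exact ⟨conj q₂ q₃, epsF_of_tauChain hchain hF hs,
    _, stableRS_conj_of_rsLT, q₂, q₃, rfl, hp'q₂, hp'q₃⟩

/-- ⊑_RS interacts well with disjunction and conjunction. -/
theorem stmt5 {Act : Type} (p₁ p₂ p₃ : Proc Act) :
    rsLE p₁ (disj p₁ p₂) ∧ rsLE p₂ (disj p₁ p₂) ∧
    (rsLE p₁ p₃ → rsLE p₂ p₃ → rsLE (disj p₁ p₂) p₃) ∧
    rsLE (conj p₁ p₂) p₁ ∧ rsLE (conj p₁ p₂) p₂ ∧
    (rsLE p₁ p₂ → rsLE p₁ p₃ → rsLE p₁ (conj p₂ p₃)) :=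
  ⟨rsLE_disj_left p₁ p₂, rsLE_disj_right p₁ p₂, disj_rsLE, conj_rsLE_left p₁ p₂,
    conj_rsLE_right p₁ p₂, rsLE_conj⟩

end Proc
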